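/- Let n ≥ 1 and let f, g ∈ L²(H_n; ℂ) be compactly supported with Sg = 0 almost everywhere on ℝ^{2n}. Then f *_H (Tg) = T(f *_H g) almost everywhere on H_n. -/

import Mathlib

/-!
The last coordinate of `q⁻¹ · (x, y, s)` is `s` minus a quantity independent of `s`, so
`T g (q⁻¹ p) = ∫_{s ≤ z} g (q⁻¹ (x, y, s)) ds` for `p = (x, y, z)`, and the identity is Fubini's
theorem for `(s, q) ↦ f q * g (q⁻¹ (x, y, s))` on `(-∞, z] × H_n`. This kernel is integrable for
almost every `(x, y)`: the map `(p, q) ↦ (q, q⁻¹ p)` preserves Haar measure on `H_n × H_n` (it is a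
translation composed with a shear in the central coordinate), so `f q * g (q⁻¹ p)` is integrable
there as soon as `f` and `g` are, which compact support and `L²` guarantee.
-/

open MeasureTheory

/-- The Heisenberg group `H_n`, as a manifold, is `ℝⁿ × ℝⁿ × ℝ`. -/
abbrev Heis (n : ℕ) := (Fin n → ℝ) × (Fin n → ℝ) × ℝ

/-- The Euclidean inner product on `ℝⁿ`. -/
def dot {n : ℕ} (a b : Fin n → ℝ) : ℝ := ∑ i, a i * b i

/-- Convolution with respect to the Heisenberg group structure
`(x,y,z)·(x',y',z') = (x+x', y+y', z+z'+⟨x,y'⟩)`: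
`(f *_H g)(p) = ∫ f(q) g(q⁻¹ p) dq`. -/
noncomputable def hconv {n : ℕ} (f g : Heis n → ℂ) : Heis n → ℂ :=
  fun p => ∫ q : Heis n,
    f q * g (p.1 - q.1, p.2.1 - q.2.1, p.2.2 - q.2.2 + dot q.1 q.2.1 - dot q.1 p.2.1)

/-- The operator `Sf(x,y) = ∫_ℝ f(x,y,z) dz`. -/
noncomputable def S {n : ℕ} (f : Heis n → ℂ) : (Fin n → ℝ) × (Fin n → ℝ) → ℂ :=
  fun xy => ∫ z : ℝ, f (xy.1, xy.2, z)

/-- The operator `Tf(x,y,z) = ∫_{-∞}^z f(x,y,t) dt`. -/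
noncomputable def T {n : ℕ} (f : Heis n → ℂ) : Heis n → ℂ :=
  fun p => ∫ t in Set.Iic p.2.2, f (p.1, p.2.1, t)

/-- A function vanishes almost everywhere outside some compact set. -/
def AECompactlySupported {n : ℕ} (f : Heis n → ℂ) : Prop :=
  ∃ K : Set (Heis n), IsCompact K ∧ ∀ᵐ p ∂(volume), p ∉ K → f p = 0

open Measure Set
open scoped ENNReal

theorem measurePreserving_shear {α G : Type*} [MeasurableSpace α]
    [MeasurableSpace G] [AddGroup G] [MeasurableAdd₂ G] (μ : Measure α) (ν : Measure G)
    [SFinite μ] [SFinite ν] [ν.IsAddLeftInvariant] {φ : α → G} (hφ : Measurable φ) :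
    MeasurePreserving (fun p : α × G => (p.1, φ p.1 + p.2)) (μ.prod ν) (μ.prod ν) :=
  (MeasurePreserving.id μ).skew_product (g := fun a x => φ a + x)
    ((hφ.comp measurable_fst).add measurable_snd) (ae_of_all _ fun a => map_add_left_eq_self ν (φ a))

theorem setIntegral_Iic_sub {E : Type*} [NormedAddCommGroup E] [NormedSpace ℝ E]
    (h : ℝ → E) (z d : ℝ) : ∫ t in Iic (z - d), h t = ∫ s in Iic z, h (s - d) := by
  simpa using (measurePreserving_add_right volume d).setIntegral_preimage_emb
    (measurableEmbedding_addRight d) (fun s => h (s - d)) (Iic z)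

namespace Heis

variable {n : ℕ}

instance : (volume : Measure (Heis n)).IsAddRightInvariant :=
  haveI : (volume : Measure ((Fin n → ℝ) × ℝ)).IsAddRightInvariant :=
    prod.instIsAddRightInvariant
  prod.instIsAddRightInvariant

@[fun_prop]
theorem measurable_dot : Measurable fun ab : (Fin n → ℝ) × (Fin n → ℝ) => dot ab.1 ab.2 := by
  unfold dot
  fun_prop

/-- `invMul q p = q⁻¹ · p`. -/
def invMul (q p : Heis n) : Heis n :=
  (p.1 - q.1, p.2.1 - q.2.1, p.2.2 - q.2.2 + dot q.1 q.2.1 - dot q.1 p.2.1)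

theorem measurable_invMul : Measurable fun qp : Heis n × Heis n => invMul qp.1 qp.2 := by
  unfold invMul
  fun_prop

theorem measurePreserving_verticalShear {φ : (Fin n → ℝ) × (Fin n → ℝ) → ℝ} (hφ : Measurable φ) :
    MeasurePreserving (fun p : Heis n => (p.1, p.2.1, φ (p.1, p.2.1) + p.2.2)) := by
  refine (MeasurePreserving.id volume).skew_product
    (g := fun a (bc : (Fin n → ℝ) × ℝ) => (bc.1, φ (a, bc.1) + bc.2)) (by fun_prop)
    (ae_of_all _ fun a => ?_)
  exact (measurePreserving_shear volume volume
    (hφ.comp (measurable_const.prodMk measurable_id))).map_eq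

theorem measurePreserving_invMul (q : Heis n) : MeasurePreserving (invMul q) := by
  have hdecomp : invMul q = (· - (q.1, q.2.1, q.2.2 - dot q.1 q.2.1)) ∘
      fun p : Heis n => (p.1, p.2.1, -dot q.1 p.2.1 + p.2.2) := by
    funext p
    simp only [invMul, Function.comp_apply, Prod.mk_sub_mk]
    congr 2
    ring
  rw [hdecomp]
  exact (measurePreserving_sub_right volume _).comp
    (measurePreserving_verticalShear (φ := fun xy => -dot q.1 xy.2) (by fun_prop))

theorem measurePreserving_prod_invMul :
    MeasurePreserving (fun pq : Heis n × Heis n => (pq.2, invMul pq.2 pq.1))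
      (volume.prod volume) (volume.prod volume) :=
  ((MeasurePreserving.id volume).skew_product measurable_invMul
    (ae_of_all _ fun q => (measurePreserving_invMul q).map_eq)).comp measurePreserving_swap

theorem quasiMeasurePreserving_horizontalProj :
    QuasiMeasurePreserving (fun p : Heis n => (p.1, p.2.1)) volume volume :=
  quasiMeasurePreserving_fst.comp
    ((measurePreserving_prodAssoc volume volume volume).symm _).quasiMeasurePreserving

theorem hconv_eq_integral_invMul (f g : Heis n → ℂ) (p : Heis n) :
    hconv f g p = ∫ q, f q * g (invMul q p) := rfl

theorem T_invMul (g : Heis n → ℂ) (q p : Heis n) :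
    T g (invMul q p) = ∫ s in Iic p.2.2, g (invMul q (p.1, p.2.1, s)) := by
  have hz : (invMul q p).2.2 = p.2.2 - (q.2.2 - dot q.1 q.2.1 + dot q.1 p.2.1) := by
    simp only [invMul]; ring
  rw [T, hz, setIntegral_Iic_sub]
  congr with s
  simp only [invMul]
  congr 3
  ring

variable {f g : Heis n → ℂ}

theorem integrable_hconv_kernel (hf : Integrable f) (hg : Integrable g) :
    Integrable (fun pq : Heis n × Heis n => f pq.2 * g (invMul pq.2 pq.1))
      (volume.prod volume) :=
  (measurePreserving_prod_invMul.integrable_comp (hf.mul_prod hg).aestronglyMeasurable).2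
    (hf.mul_prod hg)

theorem ae_integrable_hconv_kernel_verticalLine (hf : Integrable f) (hg : Integrable g) :
    ∀ᵐ p : Heis n, Integrable (fun sq : ℝ × Heis n => f sq.2 * g (invMul sq.2 (p.1, p.2.1, sq.1)))
      (volume.prod volume) := by
  have hreassoc : MeasurePreserving
      (fun r : ((Fin n → ℝ) × (Fin n → ℝ)) × ℝ × Heis n =>
        (((r.1.1, r.1.2, r.2.1) : Heis n), r.2.2))
      (volume.prod (volume.prod volume)) (volume.prod volume) :=
    ((measurePreserving_prodAssoc (volume : Measure (Fin n → ℝ)) (volume : Measure (Fin n → ℝ))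
      (volume : Measure ℝ)).prod (MeasurePreserving.id (volume : Measure (Heis n)))).comp
      ((measurePreserving_prodAssoc (volume : Measure ((Fin n → ℝ) × (Fin n → ℝ)))
        (volume : Measure ℝ) (volume : Measure (Heis n))).symm MeasurableEquiv.prodAssoc)
  have hint := (hreassoc.integrable_comp
    (integrable_hconv_kernel hf hg).aestronglyMeasurable).2 (integrable_hconv_kernel hf hg)
  exact quasiMeasurePreserving_horizontalProj.ae hint.prod_right_ae

theorem hconv_T_of_integrable (hf : Integrable f) (hg : Integrable g) :
    hconv f (T g) =ᵐ[volume] T (hconv f g) := by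
  filter_upwards [ae_integrable_hconv_kernel_verticalLine hf hg] with p hp
  have hp' : Integrable (fun sq : ℝ × Heis n => f sq.2 * g (invMul sq.2 (p.1, p.2.1, sq.1)))
      ((volume.restrict (Iic p.2.2)).prod volume) := by
    have := hp.integrableOn (s := Iic p.2.2 ×ˢ univ)
    rwa [IntegrableOn, ← prod_restrict, restrict_univ] at this
  calc hconv f (T g) p
      = ∫ q, ∫ s in Iic p.2.2, f q * g (invMul q (p.1, p.2.1, s)) := by
        simp only [hconv_eq_integral_invMul, T_invMul, integral_const_mul]
    _ = ∫ s in Iic p.2.2, ∫ q, f q * g (invMul q (p.1, p.2.1, s)) :=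
        (integral_integral_swap hp').symm
    _ = T (hconv f g) p := rfl

end Heis

theorem MeasureTheory.MemLp.integrable_of_aeCompactlySupported {n : ℕ} {f : Heis n → ℂ} {p : ℝ≥0∞}
    (hp : 1 ≤ p) (hf : MemLp f p volume) (hfc : AECompactlySupported f) : Integrable f := by
  obtain ⟨K, hK, hKf⟩ := hfc
  exact ((hf.locallyIntegrable hp).integrableOn_isCompact hK).integrable_of_ae_notMem_eq_zero hKf

theorem hconv_T_right_general (n : ℕ) (f g : Heis n → ℂ)
    (hf : MemLp f 2 volume) (hg : MemLp g 2 volume)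
    (hfc : AECompactlySupported f) (hgc : AECompactlySupported g) :
    hconv f (T g) =ᵐ[volume] T (hconv f g) :=
  Heis.hconv_T_of_integrable (hf.integrable_of_aeCompactlySupported one_le_two hfc)
    (hg.integrable_of_aeCompactlySupported one_le_two hgc)

/-- For compactly supported `f, g ∈ L²(H_n)` with `Sg = 0` a.e.,
`f *_H (Tg) = T(f *_H g)` a.e. on `H_n`. -/
theorem hconv_T_right (n : ℕ) (hn : 1 ≤ n) (f g : Heis n → ℂ)
    (hf : MemLp f 2 volume) (hg : MemLp g 2 volume)
    (hfc : AECompactlySupported f) (hgc : AECompactlySupported g)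
    (hSg : S g =ᵐ[volume] 0) :
    hconv f (T g) =ᵐ[volume] T (hconv f g) :=
  hconv_T_right_general n f g hf hg hfc hgc
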